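/- arXiv:1712.08780 — 3 statements merged into one kernel-verified Lean document; each statement's English description precedes it below -/
import Mathlib

section
/- For every tree T without isolated vertices and every graph H, γ_gr^t(T × H) = γ_gr^t(T) · γ_gr^t(H), where × denotes the direct product. -/
open SimpleGraph

/-- A legal open neighborhood sequence in `G`. -/
def IsOpenLegal {α : Type*} (G : SimpleGraph α) (L : List α) : Prop :=
  L.Nodup ∧ ∀ i : Fin L.length, ∃ w, G.Adj (L.get i) w ∧
    ∀ j : Fin L.length, j < i → ¬ G.Adj (L.get j) w

/-- The Grundy total domination number of `G`. -/
noncomputable def grundyT {α : Type*} (G : SimpleGraph α) : ℕ :=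
  sSup {n | ∃ L : List α, IsOpenLegal G L ∧ L.length = n}

/-- A legal closed neighborhood (dominating) sequence in `G`. -/
def IsClosedLegal {α : Type*} (G : SimpleGraph α) (L : List α) : Prop :=
  L.Nodup ∧ ∀ i : Fin L.length, ∃ w, (G.Adj (L.get i) w ∨ L.get i = w) ∧
    ∀ j : Fin L.length, j < i → ¬ (G.Adj (L.get j) w ∨ L.get j = w)

/-- The Grundy domination number of `G`. -/
noncomputable def grundyDom {α : Type*} (G : SimpleGraph α) : ℕ :=
  sSup {n | ∃ L : List α, IsClosedLegal G L ∧ L.length = n}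

/-- The direct (tensor) product of simple graphs. -/
def directProd {α β : Type*} (G : SimpleGraph α) (H : SimpleGraph β) : SimpleGraph (α × β) where
  Adj x y := G.Adj x.1 y.1 ∧ H.Adj x.2 y.2
  symm := ⟨fun _ _ h => ⟨h.1.symm, h.2.symm⟩⟩
  loopless := ⟨fun x h => G.loopless.irrefl x.1 h.1⟩

/-- The lexicographic product of simple graphs. -/
def lexProd {α β : Type*} (G : SimpleGraph α) (H : SimpleGraph β) : SimpleGraph (α × β) where
  Adj x y := G.Adj x.1 y.1 ∨ (x.1 = y.1 ∧ H.Adj x.2 y.2)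
  symm := by
    constructor
    rintro x y (h | ⟨h1, h2⟩)
    · exact Or.inl h.symm
    · exact Or.inr ⟨h1.symm, h2.symm⟩
  loopless := by
    constructor
    rintro x (h | ⟨_, h⟩)
    · exact G.loopless.irrefl _ h
    · exact H.loopless.irrefl _ h

/-- The strong product of simple graphs. -/
def strongProd {α β : Type*} (G : SimpleGraph α) (H : SimpleGraph β) : SimpleGraph (α × β) where
  Adj x y := (G.Adj x.1 y.1 ∧ x.2 = y.2) ∨ (x.1 = y.1 ∧ H.Adj x.2 y.2) ∨
    (G.Adj x.1 y.1 ∧ H.Adj x.2 y.2)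
  symm := by
    constructor
    rintro x y (⟨h, e⟩ | ⟨e, h⟩ | ⟨h1, h2⟩)
    · exact Or.inl ⟨h.symm, e.symm⟩
    · exact Or.inr (Or.inl ⟨e.symm, h.symm⟩)
    · exact Or.inr (Or.inr ⟨h1.symm, h2.symm⟩)
  loopless := by
    constructor
    rintro x (⟨h, _⟩ | ⟨_, h⟩ | ⟨h, _⟩)
    · exact G.loopless.irrefl _ h
    · exact H.loopless.irrefl _ h
    · exact G.loopless.irrefl _ h

/-- The minimum number of complete bipartite subgraphs of `G` covering all edges of `G`. -/
noncomputable def bc {α : Type*} (G : SimpleGraph α) : ℕ :=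
  sInf {k | ∃ A B : Fin k → Set α,
    (∀ i a b, a ∈ A i → b ∈ B i → G.Adj a b) ∧
    (∀ u v, G.Adj u v → ∃ i, (u ∈ A i ∧ v ∈ B i) ∨ (v ∈ A i ∧ u ∈ B i))}

/-- `aD G L` is the number of entries of `L` not adjacent to any earlier entry. -/
noncomputable def aD {α : Type*} (G : SimpleGraph α) (L : List α) : ℕ :=
  {i : Fin L.length | ∀ j : Fin L.length, j < i → ¬ G.Adj (L.get j) (L.get i)}.ncard

/-- The vertex cover number of `G`. -/
noncomputable def vertexCoverNum {α : Type*} (G : SimpleGraph α) : ℕ :=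
  sInf {n | ∃ S : Finset α, S.card = n ∧ ∀ u v, G.Adj u v → u ∈ S ∨ v ∈ S}

/-- The independence number of `G`. -/
noncomputable def indepNum {α : Type*} (G : SimpleGraph α) : ℕ :=
  sSup {n | ∃ S : Finset α, S.card = n ∧ ∀ u ∈ S, ∀ v ∈ S, ¬ G.Adj u v}

/-!
Lower bound: if `f` and `g` are legal sequences of `G` and `H` with footprints `w a` and `w' b`,
the pairs `(f a, g b)`, listed lexicographically, form a legal sequence of `G × H` with footprints
`(w a, w' b)`.

Upper bound: fix a minimum vertex cover `S` of `G`. An entry `x` of a legal sequence of `G × H`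
with footprint `y` spans the edge `x.1 y.1` of `G`, which `S` covers at `x.1` or at `y.1`; this
sorts the entries into `2 |S|` classes. Inside one class every first coordinate is adjacent to
every footprint's first coordinate, so the second coordinates form a legal sequence of `H`. Hence
`γ(G × H) ≤ 2 β(G) γ(H)`.

For a forest, `2 β ≤ γ`: repeatedly take a leaf `u` with neighbour `v` and delete the edges at
`v`. The edges `u i v i` obtained this way have the `v i` as a vertex cover, and
`u 0, …, u (k-1), v (k-1), …, v 0` is legal, with footprints `v i` and `u i` respectively.
-/

section

variable {α β : Type*}

/-- `IsOpenLegal` for sequences indexed by `Fin n`; distinctness of the entries is automatic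
(`IsLegalSeq.injective`). -/
def IsLegalSeq (G : SimpleGraph α) {n : ℕ} (f : Fin n → α) : Prop :=
  ∀ i, ∃ w, G.Adj (f i) w ∧ ∀ j < i, ¬ G.Adj (f j) w

lemma isOpenLegal_nil (G : SimpleGraph α) : IsOpenLegal G [] :=
  ⟨List.nodup_nil, fun i => i.elim0⟩

lemma nonempty_grundyT_set (G : SimpleGraph α) :
    {n | ∃ L : List α, IsOpenLegal G L ∧ L.length = n}.Nonempty :=
  ⟨0, [], isOpenLegal_nil G, rfl⟩

lemma bddAbove_grundyT_set [Finite α] (G : SimpleGraph α) :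
    BddAbove {n | ∃ L : List α, IsOpenLegal G L ∧ L.length = n} := by
  have := Fintype.ofFinite α
  refine ⟨Fintype.card α, ?_⟩
  rintro _ ⟨L, hL, rfl⟩
  exact hL.1.length_le_card

namespace IsLegalSeq

variable {G : SimpleGraph α} {n : ℕ} {f : Fin n → α}

lemma injective (hf : IsLegalSeq G f) : Function.Injective f := by
  intro i j hij
  by_contra hne
  rcases lt_or_gt_of_ne hne with h | h
  · obtain ⟨w, hw, hnew⟩ := hf j
    exact hnew i h (hij ▸ hw)
  · obtain ⟨w, hw, hnew⟩ := hf i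
    exact hnew j h (hij ▸ hw)

lemma isOpenLegal (hf : IsLegalSeq G f) : IsOpenLegal G (List.ofFn f) := by
  refine ⟨List.nodup_ofFn.2 hf.injective, fun i => ?_⟩
  obtain ⟨w, hw, hnew⟩ := hf (Fin.cast List.length_ofFn i)
  refine ⟨w, ?_, fun j hj => ?_⟩ <;> simp only [List.get_ofFn]
  exacts [hw, hnew _ hj]

lemma le_grundyT [Finite α] (hf : IsLegalSeq G f) : n ≤ grundyT G :=
  le_csSup (bddAbove_grundyT_set G) ⟨List.ofFn f, hf.isOpenLegal, List.length_ofFn⟩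

end IsLegalSeq

lemma exists_isLegalSeq_grundyT [Finite α] (G : SimpleGraph α) :
    ∃ f : Fin (grundyT G) → α, IsLegalSeq G f := by
  obtain ⟨L, hL, hlen⟩ := Nat.sSup_mem (nonempty_grundyT_set G) (bddAbove_grundyT_set G)
  rw [grundyT, ← hlen]
  exact ⟨L.get, hL.2⟩

lemma grundyT_le {G : SimpleGraph α} {m : ℕ}
    (h : ∀ n (f : Fin n → α), IsLegalSeq G f → n ≤ m) : grundyT G ≤ m :=
  csSup_le (nonempty_grundyT_set G) fun _ ⟨_, hL, hlen⟩ => hlen ▸ h _ _ hL.2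

lemma finProdFinEquiv_lt_finProdFinEquiv_iff {m n : ℕ} {a a' : Fin m} {b b' : Fin n} :
    finProdFinEquiv (a', b') < finProdFinEquiv (a, b) ↔ a' < a ∨ a' = a ∧ b' < b := by
  simp only [Fin.lt_def, finProdFinEquiv_apply_val, Fin.ext_iff]
  have := b.2
  have := b'.2
  rcases lt_trichotomy (a' : ℕ) a with ha | ha | ha
  · have : n * a' + n ≤ n * a := (Nat.mul_add_one n a').symm ▸ Nat.mul_le_mul_left n ha
    omega
  · rw [ha]
    omega
  · have : n * a + n ≤ n * a' := (Nat.mul_add_one n a).symm ▸ Nat.mul_le_mul_left n ha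
    omega

lemma IsLegalSeq.directProd {G : SimpleGraph α} {H : SimpleGraph β} {m n : ℕ}
    {f : Fin m → α} {g : Fin n → β} (hf : IsLegalSeq G f) (hg : IsLegalSeq H g) :
    IsLegalSeq (directProd G H)
      fun p => (f (finProdFinEquiv.symm p).1, g (finProdFinEquiv.symm p).2) := by
  intro p
  obtain ⟨⟨a, b⟩, rfl⟩ := finProdFinEquiv.surjective p
  obtain ⟨w, hw, hnew⟩ := hf a
  obtain ⟨w', hw', hnew'⟩ := hg b
  refine ⟨(w, w'), ⟨by simpa using hw, by simpa using hw'⟩, fun q hq hadj => ?_⟩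
  obtain ⟨⟨a', b'⟩, rfl⟩ := finProdFinEquiv.surjective q
  simp only [Equiv.symm_apply_apply] at hadj
  rcases finProdFinEquiv_lt_finProdFinEquiv_iff.1 hq with ha | ⟨rfl, hb⟩
  · exact hnew a' ha hadj.1
  · exact hnew' b' hb hadj.2

lemma mul_grundyT_le_grundyT_directProd [Finite α] [Finite β] (G : SimpleGraph α)
    (H : SimpleGraph β) : grundyT G * grundyT H ≤ grundyT (directProd G H) := by
  obtain ⟨f, hf⟩ := exists_isLegalSeq_grundyT G
  obtain ⟨g, hg⟩ := exists_isLegalSeq_grundyT H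
  exact (hf.directProd hg).le_grundyT

lemma card_le_grundyT_of_forall_adj [Finite β] {G : SimpleGraph α} {H : SimpleGraph β} {N : ℕ}
    {f w : Fin N → α × β} (hH : ∀ i, H.Adj (f i).2 (w i).2)
    (hnew : ∀ i, ∀ j < i, ¬ (directProd G H).Adj (f j) (w i))
    {C : Finset (Fin N)} (hC : ∀ i ∈ C, ∀ j ∈ C, G.Adj (f i).1 (w j).1) :
    C.card ≤ grundyT H := by
  let s := C.orderEmbOfFin rfl
  refine IsLegalSeq.le_grundyT (f := fun t => (f (s t)).2) fun t =>
    ⟨(w (s t)).2, hH _, fun t' ht' hadj => hnew (s t) (s t') (s.strictMono ht') ⟨?_, hadj⟩⟩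
  exact hC _ (C.orderEmbOfFin_mem rfl t') _ (C.orderEmbOfFin_mem rfl t)

lemma vertexCoverNum_le_card {G : SimpleGraph α} {S : Finset α}
    (hS : ∀ u v, G.Adj u v → u ∈ S ∨ v ∈ S) : _root_.vertexCoverNum G ≤ S.card :=
  Nat.sInf_le ⟨S, rfl, hS⟩

lemma exists_card_eq_vertexCoverNum [Finite α] (G : SimpleGraph α) :
    ∃ S : Finset α, S.card = _root_.vertexCoverNum G ∧ ∀ u v, G.Adj u v → u ∈ S ∨ v ∈ S := by
  have := Fintype.ofFinite α
  exact Nat.sInf_mem (s := {n | ∃ S : Finset α, S.card = n ∧ ∀ u v, G.Adj u v → u ∈ S ∨ v ∈ S})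
    ⟨_, Finset.univ, rfl, fun u _ _ => Or.inl (Finset.mem_univ u)⟩

lemma grundyT_directProd_le [Finite α] [Finite β] (G : SimpleGraph α) (H : SimpleGraph β) :
    grundyT (directProd G H) ≤ 2 * _root_.vertexCoverNum G * grundyT H := by
  classical
  obtain ⟨S, hcard, hS⟩ := exists_card_eq_vertexCoverNum G
  refine grundyT_le fun N f hf => ?_
  choose w hw hnew using hf
  -- `inl s`: the edge `(f i).1 (w i).1` is covered at the entry; `inr s`: at its footprint.
  have hcover : ∀ i, ∃ c ∈ S.disjSum S, Sum.elim (· = (f i).1) (· = (w i).1) c := by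
    intro i
    rcases hS _ _ (hw i).1 with h | h
    · exact ⟨.inl _, Finset.inl_mem_disjSum.2 h, rfl⟩
    · exact ⟨.inr _, Finset.inr_mem_disjSum.2 h, rfl⟩
  choose φ hφS hφ using hcover
  have hclass : ∀ c ∈ S.disjSum S, (Finset.univ.filter fun i => φ i = c).card ≤ grundyT H := by
    refine fun c _ => card_le_grundyT_of_forall_adj (fun i => (hw i).2) hnew fun i hi j hj => ?_
    have hfi := (Finset.mem_filter.1 hi).2 ▸ hφ i
    have hfj := (Finset.mem_filter.1 hj).2 ▸ hφ j
    cases c with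
    | inl x => exact (hfi.symm.trans hfj) ▸ (hw j).1
    | inr x => exact (hfj.symm.trans hfi) ▸ (hw i).1
  calc N = (Finset.univ : Finset (Fin N)).card := (Finset.card_fin N).symm
    _ ≤ grundyT H * (S.disjSum S).card :=
      Finset.card_le_mul_card_image_of_maps_to (fun i _ => hφS i) _ hclass
    _ = 2 * _root_.vertexCoverNum G * grundyT H := by rw [Finset.card_disjSum, hcard]; ring

structure IsTriangularMatching (G : SimpleGraph α) {k : ℕ} (u v : Fin k → α) : Prop where
  adj : ∀ i, G.Adj (u i) (v i)
  not_adj : ∀ i j, ¬ G.Adj (u i) (u j)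
  le_of_adj : ∀ i j, G.Adj (u i) (v j) → j ≤ i

namespace IsTriangularMatching

variable {G : SimpleGraph α} {k : ℕ} {u v : Fin k → α}

lemma isLegalSeq (h : IsTriangularMatching G u v) :
    IsLegalSeq G (Fin.append u (v ∘ Fin.rev)) := by
  intro p
  induction p using Fin.addCases with
  | left i =>
    refine ⟨v i, by simpa using h.adj i, fun q hq => ?_⟩
    induction q using Fin.addCases with
    | left j =>
      simpa using fun hadj =>
        (h.le_of_adj j i hadj).not_gt ((Fin.strictMono_castAdd k).lt_iff_lt.1 hq)
    | right j => exact absurd hq (by rw [Fin.lt_def, Fin.val_natAdd, Fin.val_castAdd]; omega)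
  | right i =>
    simp only [Fin.append_right, Function.comp_apply]
    refine ⟨u i.rev, (h.adj i.rev).symm, fun q hq => ?_⟩
    induction q using Fin.addCases with
    | left j => simpa using h.not_adj j i.rev
    | right j =>
      simp only [Fin.append_right, Function.comp_apply]
      exact fun hadj => (Fin.rev_le_rev.1 (h.le_of_adj _ _ hadj.symm)).not_gt
        ((Fin.natAdd_lt_natAdd_iff k).1 hq)

lemma two_mul_le_grundyT [Finite α] (h : IsTriangularMatching G u v) : 2 * k ≤ grundyT G :=
  two_mul k ▸ h.isLegalSeq.le_grundyT

end IsTriangularMatching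

lemma SimpleGraph.IsAcyclic.exists_adj_forall_adj_eq [Finite α] {G : SimpleGraph α}
    (hG : G.IsAcyclic) {a b : α} (hab : G.Adj a b) :
    ∃ u v, G.Adj u v ∧ ∀ w, G.Adj u w → w = v := by
  have : Nonempty α := ⟨a⟩
  obtain ⟨u, v, p, hp, hmax⟩ := Walk.exists_isPath_forall_isPath_length_le_length G
  have hnil : ¬ p.Nil :=
    Walk.not_nil_iff_lt_length.2 (hmax _ _ hab.toWalk (Walk.IsPath.of_adj hab))
  refine ⟨u, p.snd, p.adj_snd hnil, fun w hw => hG.eq_snd_of_adj_start hp hw ?_⟩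
  by_contra hwp
  have := hmax _ _ (p.cons hw.symm) (hp.cons hwp)
  simp at this

lemma SimpleGraph.IsAcyclic.exists_isTriangularMatching [Finite α] {G : SimpleGraph α}
    (hG : G.IsAcyclic) : ∃ (k : ℕ) (u v : Fin k → α),
      IsTriangularMatching G u v ∧ ∀ x y, G.Adj x y → ∃ i, x = v i ∨ y = v i := by
  induction G using WellFoundedLT.induction with | _ G ih
  by_cases hedge : ∃ a b, G.Adj a b
  swap
  · push Not at hedge
    exact ⟨0, Fin.elim0, Fin.elim0, ⟨fun i => i.elim0, fun i => i.elim0, fun i => i.elim0⟩,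
      fun x y h => (hedge x y h).elim⟩
  obtain ⟨a, b, hab⟩ := hedge
  obtain ⟨u₀, v₀, huv₀, hleaf⟩ := hG.exists_adj_forall_adj_eq hab
  -- `v₀` is the only neighbour of `u₀`, so deleting the edges at `v₀` isolates both.
  have hle := G.deleteIncidenceSet_le v₀
  have hlt : G.deleteIncidenceSet v₀ < G :=
    lt_of_le_of_ne hle fun h => (deleteIncidenceSet_adj.1 (h ▸ huv₀)).2.2 rfl
  obtain ⟨k, u, v, hm, hcov⟩ := ih _ hlt (hG.anti hle)
  have hdel {x y : α} (h : G.Adj x y) (hx : x ≠ v₀) (hy : y ≠ v₀) :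
      (G.deleteIncidenceSet v₀).Adj x y :=
    deleteIncidenceSet_adj.2 ⟨h, hx, hy⟩
  have hu (i : Fin k) : u i ≠ v₀ := (deleteIncidenceSet_adj.1 (hm.adj i)).2.1
  have hv (i : Fin k) : v i ≠ v₀ := (deleteIncidenceSet_adj.1 (hm.adj i)).2.2
  refine ⟨k + 1, Fin.cons u₀ u, Fin.cons v₀ v, ⟨fun i => ?_, fun i j => ?_, fun i j => ?_⟩, ?_⟩
  · cases i using Fin.cases with
    | zero => simpa using huv₀
    | succ i => simpa using hle (hm.adj i)
  · cases i using Fin.cases <;> cases j using Fin.cases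
    · simp
    · simpa using fun h => hu _ (hleaf _ h)
    · simpa using fun h => hu _ (hleaf _ h.symm)
    · simpa using fun h => hm.not_adj _ _ (hdel h (hu _) (hu _))
  · cases i using Fin.cases <;> cases j using Fin.cases
    · simp
    · simpa using fun h => hv _ (hleaf _ h)
    · simp
    · simpa using fun h => hm.le_of_adj _ _ (hdel h (hu _) (hv _))
  · intro x y hxy
    by_cases hx : x = v₀
    · exact ⟨0, Or.inl hx⟩
    by_cases hy : y = v₀
    · exact ⟨0, Or.inr hy⟩
    obtain ⟨i, hi⟩ := hcov x y (hdel hxy hx hy)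
    exact ⟨i.succ, by simpa using hi⟩

lemma SimpleGraph.IsAcyclic.two_mul_vertexCoverNum_le_grundyT [Finite α] {G : SimpleGraph α}
    (hG : G.IsAcyclic) : 2 * _root_.vertexCoverNum G ≤ grundyT G := by
  classical
  obtain ⟨k, u, v, hm, hcov⟩ := hG.exists_isTriangularMatching
  have hcover : ∀ x y, G.Adj x y → x ∈ Finset.univ.image v ∨ y ∈ Finset.univ.image v := by
    intro x y hxy
    obtain ⟨i, rfl | rfl⟩ := hcov x y hxy <;> simp
  calc 2 * _root_.vertexCoverNum G ≤ 2 * k := by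
        gcongr
        exact (vertexCoverNum_le_card hcover).trans (Finset.card_image_le.trans (by simp))
    _ ≤ grundyT G := hm.two_mul_le_grundyT

end

theorem grundyT_directProd_tree_general {α β : Type*} [Fintype α] [Fintype β]
    (T : SimpleGraph α) (hT : T.IsTree)
    (H : SimpleGraph β) :
    grundyT (directProd T H) = grundyT T * grundyT H :=
  le_antisymm
    (calc grundyT (directProd T H) ≤ 2 * _root_.vertexCoverNum T * grundyT H :=
          grundyT_directProd_le T H
      _ ≤ grundyT T * grundyT H :=
          Nat.mul_le_mul_right _ hT.isAcyclic.two_mul_vertexCoverNum_le_grundyT)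
    (mul_grundyT_le_grundyT_directProd T H)

theorem grundyT_directProd_tree {α β : Type*} [Fintype α] [Fintype β]
    (T : SimpleGraph α) (hT : T.IsTree) (hiso : ∀ v, ∃ w, T.Adj v w)
    (H : SimpleGraph β) :
    grundyT (directProd T H) = grundyT T * grundyT H :=
  grundyT_directProd_tree_general T hT H
end

section
/- For odd integers n_1, n_2 ≥ 3, the Grundy total domination number of the direct product of cycles satisfies γ_gr^t(C_{n_1} × C_{n_2}) = γ_gr^t(C_{n_1}) · γ_gr^t(C_{n_2}) = (n_1 − 1)(n_2 − 1). -/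
open SimpleGraph

/-!
If `(v₁, …, vₖ)` is open-legal with footprints `wᵢ`, the rows of the adjacency matrix at
`v₁, …, vₖ` are linearly independent over any field: row `vᵢ` is `1` at `wᵢ`, where all earlier
rows vanish. Hence `γ_gr^t(G) ≤ rank A(G)`. Over `𝔽₂` every row of `A(Cₙ)` has even weight, so
`rank A(Cₙ) ≤ n - 1`, and `A(G × H) = A(G) ⊗ A(H)` has rank at most `rank A(G) · rank A(H)`.

Conversely, in an odd cycle the vertices `0, 2, 4, …, 2(n - 2) (mod n)` form a legal sequence with
footprints `2i + 1`, as `2` is invertible mod `n`; and ordering `G × H` lexicographically, the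
products of two legal sequences form a legal sequence with footprints `(wᵢ, w'ⱼ)`.
-/

open Module Submodule Matrix
open scoped Kronecker

variable {α β ι κ K : Type*} {G : SimpleGraph α} {H : SimpleGraph β}

def IsOpenLegalFamily [LT ι] (G : SimpleGraph α) (v : ι → α) : Prop :=
  Function.Injective v ∧ ∀ i, ∃ w, G.Adj (v i) w ∧ ∀ j < i, ¬ G.Adj (v j) w

theorem isOpenLegal_iff_isOpenLegalFamily_get {L : List α} :
    IsOpenLegal G L ↔ IsOpenLegalFamily G L.get := by
  rw [IsOpenLegal, IsOpenLegalFamily, List.nodup_iff_injective_get]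

theorem grundyT_eq_of_isGreatest {k : ℕ} (hL : ∃ L, IsOpenLegal G L ∧ L.length = k)
    (hle : ∀ L, IsOpenLegal G L → L.length ≤ k) : grundyT G = k :=
  IsGreatest.csSup_eq ⟨hL, fun _ ⟨L, hL, hk⟩ => hk ▸ hle L hL⟩

theorem IsOpenLegalFamily.comp_strictMono [Preorder ι] [LinearOrder κ] {v : ι → α}
    (hv : IsOpenLegalFamily G v) {e : κ → ι} (he : StrictMono e) :
    IsOpenLegalFamily G (v ∘ e) := by
  refine ⟨hv.1.comp he.injective, fun i => ?_⟩
  obtain ⟨w, hadj, hnew⟩ := hv.2 (e i)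
  exact ⟨w, hadj, fun j hji => hnew (e j) (he hji)⟩

theorem IsOpenLegalFamily.exists_isOpenLegal [LinearOrder ι] [Fintype ι] {v : ι → α}
    (hv : IsOpenLegalFamily G v) : ∃ L, IsOpenLegal G L ∧ L.length = Fintype.card ι := by
  let e := Fintype.orderIsoFinOfCardEq ι rfl
  refine ⟨List.ofFn (v ∘ e), ?_, List.length_ofFn⟩
  have hget : (List.ofFn (v ∘ e)).get = v ∘ e ∘ Fin.cast List.length_ofFn :=
    funext (List.get_ofFn _)
  rw [isOpenLegal_iff_isOpenLegalFamily_get, hget]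
  exact hv.comp_strictMono (e.strictMono.comp (Fin.cast_strictMono _))

theorem IsOpenLegalFamily.directProd [Preorder ι] [Preorder κ] {v₁ : ι → α} {v₂ : κ → β}
    (h₁ : IsOpenLegalFamily G v₁) (h₂ : IsOpenLegalFamily H v₂) :
    IsOpenLegalFamily (directProd G H) (fun p : ι ×ₗ κ => (v₁ (ofLex p).1, v₂ (ofLex p).2)) := by
  refine ⟨fun p q hpq => ?_, fun p => ?_⟩
  · simp only [Prod.mk.injEq] at hpq
    exact ofLex.injective (Prod.ext (h₁.1 hpq.1) (h₂.1 hpq.2))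
  · obtain ⟨w₁, hadj₁, hnew₁⟩ := h₁.2 (ofLex p).1
    obtain ⟨w₂, hadj₂, hnew₂⟩ := h₂.2 (ofLex p).2
    refine ⟨(w₁, w₂), ⟨hadj₁, hadj₂⟩, fun q hqp hadj => ?_⟩
    rcases Prod.Lex.lt_iff.1 hqp with hlt | ⟨heq, hlt⟩
    · exact hnew₁ _ hlt hadj.1
    · exact hnew₂ _ hlt hadj.2

theorem IsOpenLegal.exists_directProd {L₁ : List α} {L₂ : List β} (h₁ : IsOpenLegal G L₁)
    (h₂ : IsOpenLegal H L₂) :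
    ∃ L, IsOpenLegal (directProd G H) L ∧ L.length = L₁.length * L₂.length := by
  rw [isOpenLegal_iff_isOpenLegalFamily_get] at h₁ h₂
  simpa using (h₁.directProd h₂).exists_isOpenLegal

open Fin.CommRing in
theorem Fin.isUnit_two_of_odd (k : ℕ) : IsUnit (2 : Fin (2 * k + 3)) := by
  refine IsUnit.of_mul_eq_one ⟨k + 2, by omega⟩ ?_
  rw [Fin.ext_iff, Fin.val_mul, Fin.val_two, Fin.val_one,
    show 2 * (k + 2) = 1 + (2 * k + 3) by ring, Nat.add_mod_right]
  exact Nat.mod_eq_of_lt (by omega)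

open Fin.CommRing in
theorem isOpenLegalFamily_cycleGraph (k : ℕ) :
    IsOpenLegalFamily (cycleGraph (2 * k + 3))
      (fun i : Fin (2 * k + 2) => 2 * Fin.castLE (by omega) i) := by
  have two_unit := Fin.isUnit_two_of_odd k
  refine ⟨fun i j hij => Fin.castLE_injective _ (two_unit.mul_right_injective hij),
    fun i => ⟨2 * Fin.castLE (by omega) i + 1, ?_, fun j hji hadj => ?_⟩⟩
  · rw [cycleGraph_adj]
    right
    ring
  set a : Fin (2 * k + 3) := Fin.castLE (by omega) j with ha
  set b : Fin (2 * k + 3) := Fin.castLE (by omega) i with hb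
  rcases hadj with h | h
  · have h' : 2 * a = 2 * (b + 1) := by linear_combination h
    have hb_lt : b < Fin.last _ := by
      rw [Fin.lt_def]
      simp [hb]
    rw [two_unit.mul_right_inj, Fin.ext_iff, Fin.val_add_one_of_lt hb_lt] at h'
    simp only [ha, hb, Fin.val_castLE] at h'
    exact absurd hji (by rw [Fin.lt_def]; omega)
  · have h' : 2 * b = 2 * a := by linear_combination h
    rw [two_unit.mul_right_inj] at h'
    exact hji.ne (Fin.castLE_injective _ h'.symm)

theorem exists_isOpenLegal_cycleGraph (k : ℕ) :
    ∃ L, IsOpenLegal (cycleGraph (2 * k + 3)) L ∧ L.length = 2 * k + 2 := by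
  simpa using (isOpenLegalFamily_cycleGraph k).exists_isOpenLegal

theorem IsOpenLegalFamily.linearIndependent_adjMatrix [Ring K] [LinearOrder ι]
    [DecidableRel G.Adj] {v : ι → α} (hv : IsOpenLegalFamily G v) :
    LinearIndependent K (fun i => G.adjMatrix K (v i)) := by
  classical
  rw [linearIndependent_iff']
  intro s g hsum i hi
  by_contra hgi
  set T := s.filter (fun j => g j ≠ 0)
  have hT : T.Nonempty := ⟨i, Finset.mem_filter.2 ⟨hi, hgi⟩⟩
  obtain ⟨hmax_s, hmax_g⟩ := Finset.mem_filter.1 (T.max'_mem hT)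
  obtain ⟨w, hadj, hnew⟩ := hv.2 (T.max' hT)
  have hw := congrFun hsum w
  simp only [Finset.sum_apply, Pi.smul_apply, Pi.zero_apply, smul_eq_mul] at hw
  rw [Finset.sum_eq_single_of_mem _ hmax_s fun j hj hne => ?_, adjMatrix_apply, if_pos hadj,
    mul_one] at hw
  · exact hmax_g hw
  by_cases hgj : g j = 0
  · rw [hgj, zero_mul]
  · have hlt : j < T.max' hT := lt_of_le_of_ne (T.le_max' j (Finset.mem_filter.2 ⟨hj, hgj⟩)) hne
    rw [adjMatrix_apply, if_neg (hnew j hlt), mul_zero]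

theorem IsOpenLegal.length_le_rank_adjMatrix [Field K] [Fintype α] [DecidableRel G.Adj]
    {L : List α} (hL : IsOpenLegal G L) : L.length ≤ (G.adjMatrix K).rank := by
  have hli := (isOpenLegal_iff_isOpenLegalFamily_get.1 hL).linearIndependent_adjMatrix (K := K)
  rw [rank_eq_finrank_span_row]
  calc L.length = finrank K (span K (Set.range fun i => G.adjMatrix K (L.get i))) := by
        rw [finrank_span_eq_card hli, Fintype.card_fin]
    _ ≤ finrank K (span K (Set.range (G.adjMatrix K))) :=
        Submodule.finrank_mono (span_mono (Set.range_comp_subset_range _ _))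

theorem Submodule.finrank_map₂_le {M N P : Type*} [Field K] [AddCommGroup M] [Module K M]
    [AddCommGroup N] [Module K N] [AddCommGroup P] [Module K P] (f : M →ₗ[K] N →ₗ[K] P)
    (p : Submodule K M) (q : Submodule K N) [FiniteDimensional K p] [FiniteDimensional K q] :
    finrank K (map₂ f p q) ≤ finrank K p * finrank K q := by
  rw [TensorProduct.map₂_eq_range_lift_comp_mapIncl, ← finrank_tensorProduct]
  exact LinearMap.finrank_range_le _

theorem Matrix.rank_kronecker_le {l m n p : Type*} [Fintype l] [Fintype m] [Fintype n]
    [Fintype p] [Field K] (A : Matrix l m K) (B : Matrix n p K) :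
    (A ⊗ₖ B).rank ≤ A.rank * B.rank := by
  let outer : (m → K) →ₗ[K] (p → K) →ₗ[K] (m × p → K) :=
    (LinearMap.mul K (m × p → K)).compl₁₂ (LinearMap.funLeft K K Prod.fst)
      (LinearMap.funLeft K K Prod.snd)
  have hrows : span K (Set.range (A ⊗ₖ B)) ≤
      map₂ outer (span K (Set.range A)) (span K (Set.range B)) := by
    rw [map₂_span_span, span_le]
    rintro _ ⟨⟨i, k⟩, rfl⟩
    exact subset_span ⟨A i, ⟨i, rfl⟩, B k, ⟨k, rfl⟩, by ext; simp [outer]⟩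
  simp only [rank_eq_finrank_span_row]
  exact (Submodule.finrank_mono hrows).trans (finrank_map₂_le _ _ _)

theorem rank_adjMatrix_lt_card_of_even_degree [Fintype α] [Nonempty α] [DecidableRel G.Adj]
    (h : ∀ v, Even (G.degree v)) : (G.adjMatrix (ZMod 2)).rank < Fintype.card α := by
  have hker : Function.const α (1 : ZMod 2) ∈ LinearMap.ker (G.adjMatrix (ZMod 2)).mulVecLin := by
    ext v
    simp [(ZMod.natCast_eq_zero_iff_even).2 (h v)]
  have hpos : 0 < finrank (ZMod 2) (LinearMap.ker (G.adjMatrix (ZMod 2)).mulVecLin) :=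
    Module.finrank_pos_iff_exists_ne_zero.2 ⟨⟨_, hker⟩, by simp⟩
  have := (G.adjMatrix (ZMod 2)).mulVecLin.finrank_range_add_finrank_ker
  rw [Module.finrank_fintype_fun_eq_card] at this
  rw [Matrix.rank]
  omega

instance [DecidableRel G.Adj] [DecidableRel H.Adj] : DecidableRel (directProd G H).Adj :=
  fun x y => inferInstanceAs (Decidable (G.Adj x.1 y.1 ∧ H.Adj x.2 y.2))

theorem adjMatrix_directProd [MulZeroOneClass K] [DecidableRel G.Adj]
    [DecidableRel H.Adj] : (directProd G H).adjMatrix K = G.adjMatrix K ⊗ₖ H.adjMatrix K := by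
  ext ⟨a, b⟩ ⟨c, d⟩
  rw [adjMatrix_apply, kronecker_apply, adjMatrix_apply, adjMatrix_apply]
  by_cases hG : G.Adj a c <;> by_cases hH : H.Adj b d <;> simp [directProd, hG, hH]

theorem rank_adjMatrix_cycleGraph_lt (n : ℕ) :
    ((cycleGraph (n + 3)).adjMatrix (ZMod 2)).rank < n + 3 := by
  simpa using rank_adjMatrix_lt_card_of_even_degree (G := cycleGraph (n + 3)) fun v =>
    cycleGraph_degree_three_le (v := v) ▸ even_two

theorem grundyT_cycleGraph_odd (k : ℕ) : grundyT (cycleGraph (2 * k + 3)) = 2 * k + 2 :=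
  grundyT_eq_of_isGreatest (exists_isOpenLegal_cycleGraph k) fun L hL => by
    have := hL.length_le_rank_adjMatrix (K := ZMod 2)
    have := rank_adjMatrix_cycleGraph_lt (2 * k)
    omega

theorem grundyT_directProd_cycleGraph_odd (k₁ k₂ : ℕ) :
    grundyT (directProd (cycleGraph (2 * k₁ + 3)) (cycleGraph (2 * k₂ + 3))) =
      (2 * k₁ + 2) * (2 * k₂ + 2) := by
  obtain ⟨L₁, hL₁, hlen₁⟩ := exists_isOpenLegal_cycleGraph k₁
  obtain ⟨L₂, hL₂, hlen₂⟩ := exists_isOpenLegal_cycleGraph k₂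
  refine grundyT_eq_of_isGreatest (hlen₁ ▸ hlen₂ ▸ hL₁.exists_directProd hL₂) fun L hL => ?_
  calc L.length ≤ ((directProd _ _).adjMatrix (ZMod 2)).rank := hL.length_le_rank_adjMatrix
    _ ≤ ((cycleGraph (2 * k₁ + 3)).adjMatrix (ZMod 2)).rank *
        ((cycleGraph (2 * k₂ + 3)).adjMatrix (ZMod 2)).rank := by
      rw [adjMatrix_directProd]
      exact rank_kronecker_le _ _
    _ ≤ (2 * k₁ + 2) * (2 * k₂ + 2) := Nat.mul_le_mul
      (Nat.le_of_lt_succ (rank_adjMatrix_cycleGraph_lt (2 * k₁)))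
      (Nat.le_of_lt_succ (rank_adjMatrix_cycleGraph_lt (2 * k₂)))

theorem grundyT_directProd_odd_cycles (n₁ n₂ : ℕ) (h₁ : 3 ≤ n₁) (h₂ : 3 ≤ n₂)
    (ho₁ : Odd n₁) (ho₂ : Odd n₂) :
    grundyT (directProd (cycleGraph n₁) (cycleGraph n₂)) =
        grundyT (cycleGraph n₁) * grundyT (cycleGraph n₂) ∧
      grundyT (directProd (cycleGraph n₁) (cycleGraph n₂)) = (n₁ - 1) * (n₂ - 1) := by
  obtain ⟨k₁, rfl⟩ : ∃ k, n₁ = 2 * k + 3 := by obtain ⟨m, rfl⟩ := ho₁; exact ⟨m - 1, by omega⟩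
  obtain ⟨k₂, rfl⟩ : ∃ k, n₂ = 2 * k + 3 := by obtain ⟨m, rfl⟩ := ho₂; exact ⟨m - 1, by omega⟩
  rw [grundyT_directProd_cycleGraph_odd, grundyT_cycleGraph_odd, grundyT_cycleGraph_odd]
  exact ⟨rfl, rfl⟩
end

section
/- For any graphs G and H, γ_gr^t(G ⊠ H) ≥ max{ γ_gr^t(G)·a(D) + (|D| − a(D))·γ_gr(G) : D is a legal closed neighborhood sequence of H }, where a(D) is the number of vertices in D not adjacent to any earlier vertex of D, and γ_gr(G) is the Grundy domination number of G. -/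
open SimpleGraph

/-! Fix an optimal open legal sequence `LT` and an optimal closed legal sequence `LC` of `G`, and
run through `D`, appending a layer `_ × {d}` for each entry `d`. If `d` is not adjacent to an
earlier entry of `D`, append `LT × {d}`, with footprints `(u, d)` for the open footprints `u` in
`LT`. Otherwise the closed footprint `w` of `d` is a neighbour of `d` outside the closed
neighbourhoods of the earlier entries, and we append `LC × {d}`, with footprints `(u, w)` for the
closed footprints `u` in `LC`. In both cases the earlier layers miss the new footprints, since
their second coordinates lie outside the closed neighbourhood of `d`, resp. `w`. -/

/-- `R x w` reads "`w` is in the neighbourhood of `x`". For `P = []` this is legality without the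
`Nodup` clause, which it implies. -/
def LegalAfter {α γ : Type*} (R : α → γ → Prop) : List α → List α → Prop
  | _, [] => True
  | P, x :: L => (∃ w, R x w ∧ ∀ y ∈ P, ¬ R y w) ∧ LegalAfter R (P ++ [x]) L

namespace LegalAfter

variable {α γ δ ε : Type*} {R : α → γ → Prop}

theorem append_iff {P A B : List α} :
    LegalAfter R P (A ++ B) ↔ LegalAfter R P A ∧ LegalAfter R (P ++ A) B := by
  induction A generalizing P with
  | nil => simp [LegalAfter]
  | cons x A ih => simp [LegalAfter, ih, and_assoc]

theorem iff_get {P L : List α} :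
    LegalAfter R P L ↔
      ∀ i : Fin L.length, ∃ w, R (L.get i) w ∧ ∀ y ∈ P ++ L.take i, ¬ R y w := by
  induction L generalizing P with
  | nil => simp [LegalAfter]
  | cons x L ih => simp [LegalAfter, ih, Fin.forall_fin_succ]

theorem nodup_append {P L : List α} (hP : P.Nodup) (h : LegalAfter R P L) :
    (P ++ L).Nodup := by
  induction L generalizing P with
  | nil => simpa using hP
  | cons x L ih =>
    obtain ⟨⟨w, hxw, hPw⟩, hL⟩ := h
    have hxP : x ∉ P := fun hx => hPw x hx hxw
    simpa using ih (hP.append (List.nodup_singleton x) (by simpa using hxP)) hL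

theorem map {S : δ → ε → Prop} (f : α → δ) (φ : γ → ε) (hS : ∀ x w, S (f x) (φ w) ↔ R x w)
    {Q : List δ} (hQ : ∀ y ∈ Q, ∀ w, ¬ S y (φ w)) {P L : List α} (h : LegalAfter R P L) :
    LegalAfter S (Q ++ P.map f) (L.map f) := by
  induction L generalizing P with
  | nil => trivial
  | cons x L ih =>
    obtain ⟨⟨w, hxw, hPw⟩, hL⟩ := h
    refine ⟨⟨φ w, (hS x w).2 hxw, ?_⟩, by simpa using ih hL⟩
    intro y hy
    rcases List.mem_append.1 hy with hy | hy
    · exact hQ y hy w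
    · obtain ⟨z, hz, rfl⟩ := List.mem_map.1 hy
      exact fun h => hPw z hz ((hS z w).1 h)

end LegalAfter

theorem List.forall_mem_take_iff {α : Type*} {L : List α} {p : α → Prop} (i : Fin L.length) :
    (∀ y ∈ L.take i, p y) ↔ ∀ j : Fin L.length, j < i → p (L.get j) := by
  simp only [List.mem_take_iff_getElem, Fin.forall_iff, Fin.lt_def]
  constructor
  · intro h j hj hji
    exact h _ ⟨j, by omega, rfl⟩
  · rintro h _ ⟨j, hj, rfl⟩
    exact h j (by omega) (by omega)

theorem legalAfter_nil_iff {α γ : Type*} {R : α → γ → Prop} {L : List α} :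
    LegalAfter R [] L ↔
      ∀ i : Fin L.length, ∃ w, R (L.get i) w ∧ ∀ j : Fin L.length, j < i → ¬ R (L.get j) w := by
  simp only [LegalAfter.iff_get, List.nil_append, List.forall_mem_take_iff]

theorem isOpenLegal_iff_legalAfter {α : Type*} {G : SimpleGraph α} {L : List α} :
    IsOpenLegal G L ↔ LegalAfter G.Adj [] L :=
  ⟨fun h => legalAfter_nil_iff.2 h.2,
    fun h => ⟨by simpa using h.nodup_append List.nodup_nil, legalAfter_nil_iff.1 h⟩⟩

theorem isClosedLegal_iff_legalAfter {α : Type*} {G : SimpleGraph α} {L : List α} :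
    IsClosedLegal G L ↔ LegalAfter (fun x w => G.Adj x w ∨ x = w) [] L :=
  ⟨fun h => legalAfter_nil_iff.2 h.2,
    fun h => ⟨by simpa using h.nodup_append List.nodup_nil, legalAfter_nil_iff.1 h⟩⟩

noncomputable def aDAfter {β : Type*} (H : SimpleGraph β) (P D : List β) : ℕ :=
  {i : Fin D.length | ∀ y ∈ P ++ D.take i, ¬ H.Adj y (D.get i)}.ncard

theorem aD_eq_aDAfter_nil {β : Type*} (H : SimpleGraph β) (D : List β) :
    aD H D = aDAfter H [] D := by
  simp only [aD, aDAfter, List.nil_append, List.forall_mem_take_iff]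

open Classical in
theorem aDAfter_cons {β : Type*} (H : SimpleGraph β) (P D : List β) (d : β) :
    aDAfter H P (d :: D) = aDAfter H (P ++ [d]) D + if ∀ y ∈ P, ¬ H.Adj y d then 1 else 0 := by
  simp only [aDAfter, Set.ncard_eq_toFinset_card', Set.toFinset_ofPred]
  refine (Fin.card_filter_univ_succ' (n := D.length) _).trans ?_
  simp [add_comm]

theorem aDAfter_le_length {β : Type*} (H : SimpleGraph β) (P D : List β) :
    aDAfter H P D ≤ D.length :=
  (Set.ncard_le_card _).trans_eq (Nat.card_fin _)

section StrongProduct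

variable {α β : Type*} {G : SimpleGraph α} {H : SimpleGraph β}

theorem strongProd_adj_mk_right {g u : α} {b : β} :
    (strongProd G H).Adj (g, b) (u, b) ↔ G.Adj g u := by
  simp [strongProd]

theorem strongProd_adj_mk_of_adj {g u : α} {b w : β} (h : H.Adj b w) :
    (strongProd G H).Adj (g, b) (u, w) ↔ G.Adj g u ∨ g = u := by
  simp only [strongProd, h.ne, and_false, h, and_true, false_or]
  tauto

theorem not_strongProd_adj_of_not_adj {x : α × β} {u : α} {w : β}
    (h : ¬ (H.Adj x.2 w ∨ x.2 = w)) : ¬ (strongProd G H).Adj x (u, w) := by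
  simp only [strongProd]
  tauto

theorem legalAfter_strongProd_of_isolated {L : List α} {Q : List (α × β)} {d : β}
    (hL : LegalAfter G.Adj [] L) (hQ : ∀ y ∈ Q, ¬ (H.Adj y.2 d ∨ y.2 = d)) :
    LegalAfter (strongProd G H).Adj Q (L.map (·, d)) := by
  simpa using hL.map (·, d) (·, d) (fun _ _ => strongProd_adj_mk_right)
    (fun y hy _ => not_strongProd_adj_of_not_adj (hQ y hy))

theorem legalAfter_strongProd_of_adj {L : List α} {Q : List (α × β)} {d w : β}
    (hL : LegalAfter (fun x u => G.Adj x u ∨ x = u) [] L) (hdw : H.Adj d w)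
    (hQ : ∀ y ∈ Q, ¬ (H.Adj y.2 w ∨ y.2 = w)) :
    LegalAfter (strongProd G H).Adj Q (L.map (·, d)) := by
  simpa using hL.map (·, d) (·, w) (fun _ _ => strongProd_adj_mk_of_adj hdw)
    (fun y hy _ => not_strongProd_adj_of_not_adj (hQ y hy))

end StrongProduct

theorem exists_legalAfter_strongProd {α β : Type*} {G : SimpleGraph α} {H : SimpleGraph β}
    {LT LC : List α} (hT : LegalAfter G.Adj [] LT)
    (hC : LegalAfter (fun x u => G.Adj x u ∨ x = u) [] LC) (P D : List β)
    (hD : LegalAfter (fun x w => H.Adj x w ∨ x = w) P D) (Q : List (α × β))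
    (hQ : ∀ y ∈ Q, y.2 ∈ P) :
    ∃ L, LegalAfter (strongProd G H).Adj Q L ∧
      L.length = LT.length * aDAfter H P D + LC.length * (D.length - aDAfter H P D) := by
  induction D generalizing P Q with
  | nil => exact ⟨[], trivial, by simp [Nat.le_zero.1 (aDAfter_le_length H P [])]⟩
  | cons d D ih =>
    obtain ⟨⟨w, hdw, hPw⟩, hD⟩ := hD
    have hQw : ∀ y ∈ Q, ¬ (H.Adj y.2 w ∨ y.2 = w) := fun y hy => hPw y.2 (hQ y hy)
    have hprefix (B : List (α × β)) (hB : ∀ y ∈ B, y.2 = d) : ∀ y ∈ Q ++ B, y.2 ∈ P ++ [d] := by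
      intro y hy
      rcases List.mem_append.1 hy with hy | hy
      · exact List.mem_append_left _ (hQ y hy)
      · simp [hB y hy]
    have hlen := aDAfter_le_length H (P ++ [d]) D
    by_cases hiso : ∀ y ∈ P, ¬ H.Adj y d
    · have hdP : d ∉ P := fun hd => hPw d hd hdw
      obtain ⟨L, hL, hLlen⟩ := ih (P ++ [d]) hD (Q ++ LT.map (·, d)) (hprefix _ (by simp))
      refine ⟨LT.map (·, d) ++ L, LegalAfter.append_iff.2 ⟨?_, hL⟩, ?_⟩
      · exact legalAfter_strongProd_of_isolated hT fun y hy h =>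
          h.elim (hiso y.2 (hQ y hy)) fun e => hdP (e ▸ hQ y hy)
      · rw [aDAfter_cons, if_pos hiso, List.length_append, List.length_map, hLlen,
          List.length_cons, Nat.add_sub_add_right]
        ring
    · obtain ⟨y, hyP, hyd⟩ : ∃ y ∈ P, H.Adj y d := by simpa using hiso
      have hdw' : H.Adj d w := hdw.resolve_right fun e => hPw y hyP (Or.inl (e ▸ hyd))
      obtain ⟨L, hL, hLlen⟩ := ih (P ++ [d]) hD (Q ++ LC.map (·, d)) (hprefix _ (by simp))
      refine ⟨LC.map (·, d) ++ L, LegalAfter.append_iff.2 ⟨?_, hL⟩, ?_⟩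
      · exact legalAfter_strongProd_of_adj hC hdw' hQw
      · rw [aDAfter_cons, if_neg hiso, List.length_append,
          List.length_map, hLlen, List.length_cons, Nat.add_zero, Nat.sub_add_comm hlen]
        ring

section Attained

variable {α : Type*} [Finite α] {p : List α → Prop}

theorem bddAbove_length_of_nodup (hp : ∀ L, p L → L.Nodup) :
    BddAbove {n | ∃ L, p L ∧ L.length = n} := by
  have := Fintype.ofFinite α
  exact ⟨Fintype.card α, by rintro _ ⟨L, hL, rfl⟩; exact (hp L hL).length_le_card⟩

theorem length_le_sSup_of_nodup (hp : ∀ L, p L → L.Nodup) {L : List α} (hL : p L) :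
    L.length ≤ sSup {n | ∃ L, p L ∧ L.length = n} :=
  le_csSup (bddAbove_length_of_nodup hp) ⟨L, hL, rfl⟩

theorem exists_length_eq_sSup_of_nodup (hp : ∀ L, p L → L.Nodup) (hnil : p []) :
    ∃ L, p L ∧ L.length = sSup {n | ∃ L, p L ∧ L.length = n} :=
  Nat.sSup_mem (s := {n | ∃ L, p L ∧ L.length = n}) ⟨0, [], hnil, rfl⟩
    (bddAbove_length_of_nodup hp)

end Attained

theorem IsOpenLegal.length_le_grundyT {α : Type*} [Finite α] {G : SimpleGraph α} {L : List α}
    (hL : IsOpenLegal G L) : L.length ≤ grundyT G :=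
  length_le_sSup_of_nodup (fun _ h => h.1) hL

theorem exists_isOpenLegal_length_eq_grundyT {α : Type*} [Finite α] (G : SimpleGraph α) :
    ∃ L, IsOpenLegal G L ∧ L.length = grundyT G :=
  exists_length_eq_sSup_of_nodup (fun _ h => h.1) (isOpenLegal_iff_legalAfter.2 trivial)

theorem exists_isClosedLegal_length_eq_grundyDom {α : Type*} [Finite α] (G : SimpleGraph α) :
    ∃ L, IsClosedLegal G L ∧ L.length = grundyDom G :=
  exists_length_eq_sSup_of_nodup (fun _ h => h.1) (isClosedLegal_iff_legalAfter.2 trivial)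

theorem grundyT_strongProd_ge {α β : Type*} [Fintype α] [Fintype β]
    (G : SimpleGraph α) (H : SimpleGraph β) (D : List β) (hD : IsClosedLegal H D) :
    grundyT G * aD H D + (D.length - aD H D) * grundyDom G ≤
      grundyT (strongProd G H) := by
  obtain ⟨LT, hT, hTlen⟩ := exists_isOpenLegal_length_eq_grundyT G
  obtain ⟨LC, hC, hClen⟩ := exists_isClosedLegal_length_eq_grundyDom G
  obtain ⟨L, hL, hLlen⟩ := exists_legalAfter_strongProd (isOpenLegal_iff_legalAfter.1 hT)
    (isClosedLegal_iff_legalAfter.1 hC) [] D (isClosedLegal_iff_legalAfter.1 hD) [] (by simp)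
  calc grundyT G * aD H D + (D.length - aD H D) * grundyDom G = L.length := by
        rw [hLlen, aD_eq_aDAfter_nil, hTlen, hClen]
        ring
    _ ≤ grundyT (strongProd G H) := (isOpenLegal_iff_legalAfter.2 hL).length_le_grundyT
end
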